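/- In the q-Brauer algebra, for 1 ≤ j < k one has g_{2j-1} g_{2j} e_{(k)} = g_{2j+1} g_{2j} e_{(k)} and g_{2j-1}^{-1} g_{2j}^{-1} e_{(k)} = g_{2j+1}^{-1} g_{2j}^{-1} e_{(k)}. -/

import Mathlib

/-- The `q`-Brauer algebra `Br_n(r, q)` (in the sense of Wenzl): an algebra `A` over a commutative
ring `R` with invertible parameters `q`, `r` and `δ = (r−1)/(q−1)`, with generators
`g_1, …, g_{n-1}` (with inverses) and `e`, subject to the Hecke relations (H) for the `g_i`,
`(E₁)`: `e² = ((r−1)/(q−1)) e`, `(E₂)`: `e g_i = g_i e` for `i > 2`, `e g_1 = g_1 e = q e`,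
`e g_2 e = r e`, `e g_2⁻¹ e = q⁻¹ e`, and `(E₃)` involving
`e_{(2)} = e (g_2 g_3 g_1⁻¹ g_2⁻¹) e`. -/
structure QBrauer (R : Type) [CommRing R] (q r δ : Rˣ) (n : ℕ)
    (A : Type) [Ring A] [Algebra R A] where
  g : ℕ → A
  ginv : ℕ → A
  e : A
  param : ((q : R) - 1) * (δ : R) = (r : R) - 1
  mul_ginv : ∀ i, 1 ≤ i → i < n → g i * ginv i = 1
  ginv_mul : ∀ i, 1 ≤ i → i < n → ginv i * g i = 1
  braid : ∀ i, 1 ≤ i → i + 1 < n → g i * g (i+1) * g i = g (i+1) * g i * g (i+1)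
  gcomm : ∀ i j, 1 ≤ i → i + 1 < j → j < n → g i * g j = g j * g i
  quad : ∀ i, 1 ≤ i → i < n → g i * g i = ((q : R) - 1) • g i + (q : R) • (1 : A)
  esq : e * e = (δ : R) • e
  e_g : ∀ i, 2 < i → i < n → e * g i = g i * e
  e_g1 : e * g 1 = (q : R) • e
  g1_e : g 1 * e = (q : R) • e
  e_g2_e : e * g 2 * e = (r : R) • e
  e_g2inv_e : e * ginv 2 * e = ((q⁻¹ : Rˣ) : R) • e
  E3_left : 4 ≤ n →
    g 2 * g 3 * ginv 1 * ginv 2 * (e * (g 2 * g 3 * ginv 1 * ginv 2) * e)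
      = e * (g 2 * g 3 * ginv 1 * ginv 2) * e
  E3_right : 4 ≤ n →
    (e * (g 2 * g 3 * ginv 1 * ginv 2) * e) * (g 2 * g 3 * ginv 1 * ginv 2)
      = e * (g 2 * g 3 * ginv 1 * ginv 2) * e

variable {R : Type} [CommRing R] {q r δ : Rˣ} {n : ℕ} {A : Type} [Ring A] [Algebra R A]

/-- `g⁺_{l,m} = g_l g_{l+1} ⋯ g_m` (for `l ≤ m`; ascending indices). -/
def gp (b : QBrauer R q r δ n A) (l m : ℕ) : A :=
  ((List.range' l (m + 1 - l)).map b.g).prod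

/-- `g⁻_{l,m} = g_l⁻¹ g_{l+1}⁻¹ ⋯ g_m⁻¹` (for `l ≤ m`; ascending indices). -/
def gm (b : QBrauer R q r δ n A) (l m : ℕ) : A :=
  ((List.range' l (m + 1 - l)).map b.ginv).prod

/-- `g⁺_{m,l} = g_m g_{m-1} ⋯ g_l` (for `m ≥ l`; descending indices). -/
def gpd (b : QBrauer R q r δ n A) (m l : ℕ) : A :=
  (((List.range' l (m + 1 - l)).map b.g).reverse).prod

/-- `g⁻_{m,l} = g_m⁻¹ g_{m-1}⁻¹ ⋯ g_l⁻¹` (for `m ≥ l`; descending indices). -/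
def gmd (b : QBrauer R q r δ n A) (m l : ℕ) : A :=
  (((List.range' l (m + 1 - l)).map b.ginv).reverse).prod

/-- The elements `e_{(k)}`, defined inductively by `e_{(1)} = e` and
`e_{(k+1)} = e g⁺_{2,2k+1} g⁻_{1,2k} e_{(k)}`. -/
def ee (b : QBrauer R q r δ n A) : ℕ → A
  | 0 => 1
  | 1 => b.e
  | (k+2) => b.e * gp b 2 (2*(k+1)+1) * gm b 1 (2*(k+1)) * ee b (k+1)

/-!
For `j ≥ 2` the identity is pushed down to `j - 1`: writing `e_{(k)} = W e_{(k-1)}` with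
`W = e g⁺_{2,2k-1} g⁻_{1,2k-2}`, the braid relations give `g_{i+2}^{±1} W = W g_i^{±1}`, so both
sides become `W` times the corresponding sides for `(j - 1, k - 1)`. For `j = 1` one factors
`e_{(k)} = e_{(2)} T`. Relation (E₃) says `g_2 g_3 g_1⁻¹ g_2⁻¹` fixes `e_{(2)}`, which after
cancelling `g_2 g_3` is the inverse identity; the braid relations and `g_1 e = q e` give
`g_1 e_{(2)} = q e_{(2)} = g_3 e_{(2)}`, and the Hecke relation `g_i = (q - 1) + q g_i⁻¹` turns
the inverse identity into the direct one.
-/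

theorem semiconjBy_zpow_of_braid {G : Type*} [Group G] {a c : G} (h : a * c * a = c * a * c)
    (m : ℤ) :
    SemiconjBy (a * c) (a ^ m) (c ^ m) ∧ SemiconjBy (a⁻¹ * c⁻¹) (a ^ m) (c ^ m) := by
  have hac : SemiconjBy (a * c) a c := by
    rw [SemiconjBy, h, mul_assoc]
  have hca : SemiconjBy (c * a) c a := by
    rw [SemiconjBy, ← h, mul_assoc]
  refine ⟨hac.zpow_right m, ?_⟩
  rw [← mul_inv_rev]
  exact (SemiconjBy.inv_symm_left_iff.mpr hca).zpow_right m

theorem Commute.prod_map_range' {M : Type*} [Monoid M] {f : ℕ → M} {x : M} {l c : ℕ}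
    (h : ∀ u, l ≤ u → u < l + c → Commute x (f u)) :
    Commute x ((List.range' l c).map f).prod := by
  refine Commute.list_prod_right _ _ fun y hy => ?_
  obtain ⟨u, hu, rfl⟩ := List.mem_map.mp hy
  obtain ⟨hlu, hul⟩ := List.mem_range'_1.mp hu
  exact h u hlu hul

theorem SemiconjBy.prod_map_range' {M : Type*} [Monoid M] {f : ℕ → M} {x y : M} {l c i : ℕ}
    (hli : l ≤ i) (hic : i + 2 ≤ l + c) (hmid : SemiconjBy (f i * f (i + 1)) x y)
    (hlow : ∀ u, l ≤ u → u < i → Commute y (f u))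
    (hhigh : ∀ u, i + 1 < u → u < l + c → Commute x (f u)) :
    SemiconjBy ((List.range' l c).map f).prod x y := by
  have hsplit : List.range' l c = List.range' l (i - l) ++ [i, i + 1] ++
      List.range' (i + 2) (l + c - (i + 2)) := by
    conv_lhs => rw [show c = (i - l) + 2 + (l + c - (i + 2)) by omega]
    rw [← List.range'_append_1, ← List.range'_append_1, show l + (i - l + 2) = i + 2 by omega,
      show l + (i - l) = i by omega]
    rfl
  have hlow' : Commute y ((List.range' l (i - l)).map f).prod :=
    Commute.prod_map_range' fun u hlu hui => hlow u hlu (by omega)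
  have hhigh' : Commute x ((List.range' (i + 2) (l + c - (i + 2))).map f).prod :=
    Commute.prod_map_range' fun u hiu hu => hhigh u (by omega) (by omega)
  rw [hsplit, List.map_append, List.map_append, List.prod_append, List.prod_append]
  simpa using SemiconjBy.mul_left (SemiconjBy.mul_left hlow'.symm hmid) hhigh'.symm

namespace QBrauer

variable (b : QBrauer R q r δ n A)

def gUnit (i : ℕ) (h1 : 1 ≤ i) (h2 : i < n) : Aˣ :=
  ⟨b.g i, b.ginv i, b.mul_ginv i h1 h2, b.ginv_mul i h1 h2⟩

/-- `b.gen true = g` and `b.gen false = g⁻¹`: both identities of the theorem are proved at once. -/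
def gen : Bool → ℕ → A
  | true => b.g
  | false => b.ginv

theorem val_gUnit_zpow (s : Bool) {i : ℕ} (h1 : 1 ≤ i) (h2 : i < n) :
    ((b.gUnit i h1 h2 ^ (if s then 1 else -1 : ℤ) : Aˣ) : A) = b.gen s i := by
  cases s <;> simp [gUnit, gen]

theorem commute_gen (s t : Bool) {i j : ℕ} (hi : 1 ≤ i) (hin : i < n) (hj : 1 ≤ j)
    (hjn : j < n) (hij : i + 1 < j ∨ j + 1 < i) : Commute (b.gen s i) (b.gen t j) := by
  have hu : Commute (b.gUnit i hi hin) (b.gUnit j hj hjn) := by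
    rcases hij with hij | hij
    · exact Units.ext (b.gcomm i j hi hij hjn)
    · exact Units.ext (b.gcomm j i hj hij hin).symm
  rw [← b.val_gUnit_zpow s hi hin, ← b.val_gUnit_zpow t hj hjn]
  exact (hu.zpow_zpow _ _).units_val

theorem commute_e_gen (s : Bool) {i : ℕ} (hi : 2 < i) (hin : i < n) :
    Commute b.e (b.gen s i) := by
  rw [← b.val_gUnit_zpow s (by omega) hin]
  exact Commute.units_zpow_right (u := b.gUnit i (by omega) hin) (b.e_g i hi hin) _

theorem semiconjBy_gen_mul_gen (s t : Bool) {i : ℕ} (hi : 1 ≤ i) (hin : i + 1 < n) :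
    SemiconjBy (b.gen t i * b.gen t (i + 1)) (b.gen s i) (b.gen s (i + 1)) := by
  have hbraid := semiconjBy_zpow_of_braid
    (Units.ext (b.braid i hi hin) : b.gUnit i hi (by omega) * b.gUnit (i + 1) (by omega) hin *
      b.gUnit i hi (by omega) = b.gUnit (i + 1) (by omega) hin * b.gUnit i hi (by omega) *
      b.gUnit (i + 1) (by omega) hin) (if s then 1 else -1)
  rw [← b.val_gUnit_zpow s hi (by omega), ← b.val_gUnit_zpow s (by omega) hin]
  cases t
  · simpa [gUnit, gen] using hbraid.2.units_val
  · simpa [gUnit, gen] using hbraid.1.units_val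

theorem semiconjBy_prod_gen (s t : Bool) {l c i : ℕ} (hl : 1 ≤ l) (hli : l ≤ i)
    (hic : i + 2 ≤ l + c) (hcn : l + c ≤ n) :
    SemiconjBy ((List.range' l c).map (b.gen t)).prod (b.gen s i) (b.gen s (i + 1)) :=
  SemiconjBy.prod_map_range' hli hic (b.semiconjBy_gen_mul_gen s t (by omega) (by omega))
    (fun u hlu hui => b.commute_gen s t (by omega) (by omega) (by omega) (by omega) (by omega))
    (fun u hiu hu => b.commute_gen s t (by omega) (by omega) (by omega) (by omega) (by omega))

theorem ee_succ_succ (t : ℕ) :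
    ee b (t + 2) = b.e * gp b 2 (2 * t + 3) * gm b 1 (2 * t + 2) * ee b (t + 1) := rfl

theorem semiconjBy_ee_step (s : Bool) {t i : ℕ} (hi : 1 ≤ i) (hit : i ≤ 2 * t + 1)
    (htn : 2 * t + 3 < n) :
    SemiconjBy (b.e * gp b 2 (2 * t + 3) * gm b 1 (2 * t + 2)) (b.gen s i) (b.gen s (i + 2)) :=
  SemiconjBy.mul_left
    (SemiconjBy.mul_left (b.commute_e_gen s (i := i + 2) (by omega) (by omega))
      (b.semiconjBy_prod_gen s true (l := 2) (c := 2 * t + 3 + 1 - 2) (i := i + 1)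
        (by omega) (by omega) (by omega) (by omega)))
    (b.semiconjBy_prod_gen s false (l := 1) (c := 2 * t + 2 + 1 - 1) (i := i)
      (by omega) (by omega) (by omega) (by omega))

theorem ee_two : ee b 2 = b.e * (b.g 2 * b.g 3 * b.ginv 1 * b.ginv 2) * b.e := by
  simp [ee, gp, gm, List.range'_succ, mul_assoc]

theorem gp_two_eq (t : ℕ) : gp b 2 (2 * t + 3) = b.g 2 * b.g 3 * gp b 4 (2 * t + 3) := by
  simp only [gp, show 2 * t + 3 + 1 - 2 = 2 * t + 1 + 1 by omega,
    show 2 * t + 3 + 1 - 4 = 2 * t by omega, List.range'_succ, List.map_cons, List.prod_cons,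
    mul_assoc]

theorem gm_one_eq (t : ℕ) : gm b 1 (2 * t + 2) = b.ginv 1 * b.ginv 2 * gm b 3 (2 * t + 2) := by
  simp only [gm, show 2 * t + 2 + 1 - 1 = 2 * t + 1 + 1 by omega,
    show 2 * t + 2 + 1 - 3 = 2 * t by omega, List.range'_succ, List.map_cons, List.prod_cons,
    mul_assoc]

theorem exists_ee_eq_e_mul (k : ℕ) : ∃ T, ee b (k + 1) = b.e * T := by
  cases k with
  | zero => exact ⟨1, (mul_one _).symm⟩
  | succ k =>
    exact ⟨gp b 2 (2 * k + 3) * gm b 1 (2 * k + 2) * ee b (k + 1), by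
      rw [ee_succ_succ]; simp only [mul_assoc]⟩

theorem exists_ee_eq_ee_two_mul (t : ℕ) (htn : 2 * t + 3 < n) :
    ∃ T, ee b (t + 2) = ee b 2 * T := by
  obtain ⟨T, hT⟩ := b.exists_ee_eq_e_mul t
  have hP : Commute (gp b 4 (2 * t + 3)) (b.ginv 1 * b.ginv 2 * b.e) := by
    refine Commute.symm (Commute.prod_map_range' fun u h4u hu => ?_)
    refine .mul_left (.mul_left ?_ ?_) ?_
    · exact b.commute_gen false true (by omega) (by omega) (by omega) (by omega) (by omega)
    · exact b.commute_gen false true (by omega) (by omega) (by omega) (by omega) (by omega)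
    · exact b.commute_e_gen true (by omega) (by omega)
  have hQ : Commute (gm b 3 (2 * t + 2)) b.e :=
    Commute.symm <|
      Commute.prod_map_range' fun u h3u hu => b.commute_e_gen false (by omega) (by omega)
  refine ⟨gp b 4 (2 * t + 3) * gm b 3 (2 * t + 2) * T, ?_⟩
  rw [ee_succ_succ, hT, gp_two_eq, gm_one_eq, ee_two]
  calc b.e * (b.g 2 * b.g 3 * gp b 4 (2 * t + 3)) * (b.ginv 1 * b.ginv 2 * gm b 3 (2 * t + 2)) *
        (b.e * T)
      = b.e * (b.g 2 * b.g 3) * gp b 4 (2 * t + 3) * (b.ginv 1 * b.ginv 2) *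
          (gm b 3 (2 * t + 2) * b.e) * T := by noncomm_ring
    _ = b.e * (b.g 2 * b.g 3) * (gp b 4 (2 * t + 3) * (b.ginv 1 * b.ginv 2 * b.e)) *
          gm b 3 (2 * t + 2) * T := by rw [hQ.eq]; noncomm_ring
    _ = _ := by rw [hP.eq]; noncomm_ring

theorem g_eq_smul_add_smul_ginv {i : ℕ} (hi : 1 ≤ i) (hin : i < n) :
    b.g i = ((q : R) - 1) • (1 : A) + (q : R) • b.ginv i := by
  have h := congrArg (· * b.ginv i) (b.quad i hi hin)
  simpa only [mul_assoc, b.mul_ginv i hi hin, mul_one, add_mul, smul_mul_assoc, one_mul] using h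

theorem g_one_mul_ee_two : b.g 1 * ee b 2 = (q : R) • ee b 2 := by
  rw [ee_two]
  simp only [← mul_assoc, b.g1_e, smul_mul_assoc]

theorem g_three_mul_ee_two (hn : 4 ≤ n) : b.g 3 * ee b 2 = (q : R) • ee b 2 := by
  have hw : SemiconjBy (b.g 2 * b.g 3 * (b.ginv 1 * b.ginv 2)) (b.g 1) (b.g 3) :=
    (b.semiconjBy_gen_mul_gen true true (i := 2) (by omega) (by omega)).mul_left
      (b.semiconjBy_gen_mul_gen true false (i := 1) le_rfl (by omega))
  rw [ee_two]
  calc b.g 3 * (b.e * (b.g 2 * b.g 3 * b.ginv 1 * b.ginv 2) * b.e)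
      = b.g 3 * b.e * (b.g 2 * b.g 3 * (b.ginv 1 * b.ginv 2)) * b.e := by noncomm_ring
    _ = b.e * (b.g 3 * (b.g 2 * b.g 3 * (b.ginv 1 * b.ginv 2))) * b.e := by
        rw [← b.e_g 3 (by omega) (by omega)]; noncomm_ring
    _ = b.e * (b.g 2 * b.g 3 * (b.ginv 1 * b.ginv 2) * b.g 1) * b.e := by rw [hw.eq]
    _ = (q : R) • (b.e * (b.g 2 * b.g 3 * b.ginv 1 * b.ginv 2) * b.e) := by
        rw [mul_assoc _ _ b.e, mul_assoc _ (b.g 1), b.g1_e]; simp only [mul_smul_comm, mul_assoc]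

theorem ginv_one_mul_ee_two (hn : 4 ≤ n) : b.ginv 1 * ee b 2 = b.ginv 3 * ee b 2 := by
  have hg : b.g 1 * ee b 2 = b.g 3 * ee b 2 := by
    rw [g_one_mul_ee_two, g_three_mul_ee_two b hn]
  have hc : b.ginv 1 * b.ginv 3 = b.ginv 3 * b.ginv 1 :=
    b.commute_gen false false (i := 1) (j := 3) le_rfl (by omega) (by omega) (by omega) (by omega)
  calc b.ginv 1 * ee b 2 = b.ginv 1 * b.ginv 3 * (b.g 3 * ee b 2) := by
        rw [mul_assoc, ← mul_assoc (b.ginv 3), b.ginv_mul 3 (by omega) (by omega), one_mul]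
    _ = b.ginv 3 * b.ginv 1 * (b.g 1 * ee b 2) := by rw [hg, hc]
    _ = b.ginv 3 * ee b 2 := by
        rw [mul_assoc, ← mul_assoc (b.ginv 1), b.ginv_mul 1 le_rfl (by omega), one_mul]

theorem ginv_ginv_ee_two (hn : 4 ≤ n) :
    b.ginv 1 * b.ginv 2 * ee b 2 = b.ginv 3 * b.ginv 2 * ee b 2 := by
  have h := b.E3_left hn
  rw [← ee_two] at h
  calc b.ginv 1 * b.ginv 2 * ee b 2
      = b.ginv 3 * (b.ginv 2 * b.g 2) * b.g 3 * (b.ginv 1 * b.ginv 2 * ee b 2) := by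
        rw [b.ginv_mul 2 (by omega) (by omega), mul_one, b.ginv_mul 3 (by omega) (by omega),
          one_mul]
    _ = b.ginv 3 * b.ginv 2 * ee b 2 := by
        conv_rhs => rw [← h]
        noncomm_ring

theorem g_g_ee_two (hn : 4 ≤ n) : b.g 1 * b.g 2 * ee b 2 = b.g 3 * b.g 2 * ee b 2 := by
  have h1 := b.ginv_one_mul_ee_two hn
  have h2 := b.ginv_ginv_ee_two hn
  simp only [mul_assoc] at h2
  rw [mul_assoc, mul_assoc, b.g_eq_smul_add_smul_ginv (i := 1) le_rfl (by omega),
    b.g_eq_smul_add_smul_ginv (i := 2) (by omega) (by omega),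
    b.g_eq_smul_add_smul_ginv (i := 3) (by omega) (by omega)]
  simp only [add_mul, mul_add, smul_mul_assoc, mul_smul_comm, one_mul, h1, h2]

theorem gen_gen_ee_two (s : Bool) (hn : 4 ≤ n) :
    b.gen s 1 * b.gen s 2 * ee b 2 = b.gen s 3 * b.gen s 2 * ee b 2 := by
  cases s
  exacts [b.ginv_ginv_ee_two hn, b.g_g_ee_two hn]

theorem gen_gen_ee (s : Bool) {m k : ℕ} (hmk : m + 1 < k) (hkn : 2 * k ≤ n) :
    b.gen s (2 * m + 1) * b.gen s (2 * m + 2) * ee b k =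
      b.gen s (2 * m + 3) * b.gen s (2 * m + 2) * ee b k := by
  obtain ⟨t, rfl⟩ : ∃ t, k = t + 2 := ⟨k - 2, by omega⟩
  induction m generalizing t with
  | zero =>
    obtain ⟨T, hT⟩ := b.exists_ee_eq_ee_two_mul t (by omega)
    rw [hT, ← mul_assoc, ← mul_assoc, b.gen_gen_ee_two s (by omega)]
  | succ m ih =>
    obtain ⟨t, rfl⟩ : ∃ t', t = t' + 1 := ⟨t - 1, by omega⟩
    set W := b.e * gp b 2 (2 * (t + 1) + 3) * gm b 1 (2 * (t + 1) + 2)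
    have hW (i : ℕ) (hi : 1 ≤ i) (hit : i ≤ 2 * (t + 1) + 1) :
        SemiconjBy W (b.gen s i) (b.gen s (i + 2)) :=
      b.semiconjBy_ee_step s hi hit (by omega)
    have hL : SemiconjBy W (b.gen s (2 * m + 1) * b.gen s (2 * m + 2))
        (b.gen s (2 * (m + 1) + 1) * b.gen s (2 * (m + 1) + 2)) :=
      (hW (2 * m + 1) (by omega) (by omega)).mul_right (hW (2 * m + 2) (by omega) (by omega))
    have hR : SemiconjBy W (b.gen s (2 * m + 3) * b.gen s (2 * m + 2))
        (b.gen s (2 * (m + 1) + 3) * b.gen s (2 * (m + 1) + 2)) :=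
      (hW (2 * m + 3) (by omega) (by omega)).mul_right (hW (2 * m + 2) (by omega) (by omega))
    rw [ee_succ_succ]
    calc _ = W * (b.gen s (2 * m + 1) * b.gen s (2 * m + 2) * ee b (t + 2)) := by
          rw [← mul_assoc, ← hL.eq, mul_assoc]
      _ = W * (b.gen s (2 * m + 3) * b.gen s (2 * m + 2) * ee b (t + 2)) := by
          rw [ih t (by omega) (by omega)]
      _ = _ := by rw [← mul_assoc, hR.eq, mul_assoc]

end QBrauer

/-- Lemma 3.2(c): for `1 ≤ j < k`, `g_{2j-1} g_{2j} e_{(k)} = g_{2j+1} g_{2j} e_{(k)}` and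
`g_{2j-1}⁻¹ g_{2j}⁻¹ e_{(k)} = g_{2j+1}⁻¹ g_{2j}⁻¹ e_{(k)}`. -/
theorem g_g_ee (b : QBrauer R q r δ n A) (j k : ℕ)
    (hj : 1 ≤ j) (hjk : j < k) (hk : 2*k ≤ n) :
    b.g (2*j-1) * b.g (2*j) * ee b k = b.g (2*j+1) * b.g (2*j) * ee b k ∧
    b.ginv (2*j-1) * b.ginv (2*j) * ee b k = b.ginv (2*j+1) * b.ginv (2*j) * ee b k := by
  obtain ⟨m, rfl⟩ : ∃ m, j = m + 1 := ⟨j - 1, by omega⟩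
  rw [show 2 * (m + 1) - 1 = 2 * m + 1 by omega]
  exact ⟨b.gen_gen_ee true (by omega) hk, b.gen_gen_ee false (by omega) hk⟩
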